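/- Let φ be the F(z)-automorphism of F(z)[x,y] given by x ↦ x + c₁R(a'₂₁x + a'₂₂y), y ↦ y + c₂R(a'₂₁x + a'₂₂y), where a'₂₁, a'₂₂ ∈ F[z] are relatively prime, R ∈ F[z][t] is a one-variable polynomial, and c₁, c₂ ∈ F[z] satisfy c₁a'₂₁ + c₂a'₂₂ = 0. Then φ restricts to an F[z]-automorphism of F[z][x,y] and is tame over F[z]. -/

import Mathlib

open MvPolynomial

noncomputable section

variable (F : Type) [Field F]

/-- Elementary `F[z]`-automorphisms of `F[z][x,y]`. -/
def IsElementary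
    (φ : MvPolynomial (Fin 2) (Polynomial F) ≃ₐ[Polynomial F]
      MvPolynomial (Fin 2) (Polynomial F)) : Prop :=
  (∃ (α : F) (_ : α ≠ 0) (p : Polynomial (Polynomial F)),
      φ (X 0) = X 0 ∧
      φ (X 1) = C (Polynomial.C α) * X 1 + Polynomial.aeval (X 0) p) ∨
  (∃ (α : F) (_ : α ≠ 0) (p : Polynomial (Polynomial F)),
      φ (X 1) = X 1 ∧
      φ (X 0) = C (Polynomial.C α) * X 0 + Polynomial.aeval (X 1) p)

/-- Linear `F[z]`-automorphisms of `F[z][x,y]` with determinant in `F*`. -/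
def IsLinearAut
    (φ : MvPolynomial (Fin 2) (Polynomial F) ≃ₐ[Polynomial F]
      MvPolynomial (Fin 2) (Polynomial F)) : Prop :=
  ∃ a b c d e f : Polynomial F, (∃ u : F, u ≠ 0 ∧ a * d - b * c = Polynomial.C u) ∧
    φ (X 0) = C a * X 0 + C b * X 1 + C e ∧
    φ (X 1) = C c * X 0 + C d * X 1 + C f

/-- Tame `F[z]`-automorphisms. -/
def IsTame
    (φ : MvPolynomial (Fin 2) (Polynomial F) ≃ₐ[Polynomial F]
      MvPolynomial (Fin 2) (Polynomial F)) : Prop :=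
  φ ∈ Subgroup.closure {ψ | IsElementary F ψ ∨ IsLinearAut F ψ}

/-! Coprimality gives `r a₂₁ + s a₂₂ = 1`, and then `c₁ a₂₁ + c₂ a₂₂ = 0` forces
`(c₁, c₂) = t (-a₂₂, a₂₁)` with `t ∈ F[z]`. So `φ` is the conjugate of the elementary map
`y ↦ y + t R(x)` by the linear map `x ↦ a₂₁ x + a₂₂ y, y ↦ -s x + r y` of determinant `1`,
and all three factors are defined over `F[z]`. -/

theorem IsCoprime.exists_eq_neg_mul_and_eq_mul {A : Type*} [CommRing A] {a b c d : A}
    (hab : IsCoprime a b) (h : c * a + d * b = 0) : ∃ t, c = -(b * t) ∧ d = a * t := by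
  obtain ⟨r, s, hrs⟩ := hab
  exact ⟨d * r - c * s, by linear_combination r * h - c * hrs,
    by linear_combination s * h - d * hrs⟩

namespace MvPolynomial

theorem map_algHom_apply_eq_of_X {A K σ : Type*} [CommSemiring A] [CommSemiring K] [Algebra A K]
    (ψ : MvPolynomial σ A →ₐ[A] MvPolynomial σ A) (φ : MvPolynomial σ K →ₐ[K] MvPolynomial σ K)
    (h : ∀ i, map (algebraMap A K) (ψ (X i)) = φ (X i)) (p : MvPolynomial σ A) :
    map (algebraMap A K) (ψ p) = φ (map (algebraMap A K) p) := by
  induction p using MvPolynomial.induction_on with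
  | C a =>
    rw [← algebraMap_eq, ψ.commutes, algebraMap_eq, map_C, ← algebraMap_eq, φ.commutes]
  | add p q hp hq => simp only [map_add, hp, hq]
  | mul_X p i hp => simp only [map_mul, hp, h, map_X]

theorem map_polynomial_aeval {A K σ : Type*} [CommSemiring A] [CommSemiring K] [Algebra A K]
    (q : MvPolynomial σ A) (R : Polynomial A) :
    map (algebraMap A K) (Polynomial.aeval q R) = Polynomial.aeval (map (algebraMap A K) q) R :=
  (Polynomial.aeval_algHom_apply (mapAlgHom (Algebra.ofId A K)) q R).symm

variable {A σ : Type*} [CommRing A]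

theorem C_mul_C_sub_C_mul_C_eq_one {a b c d : A} (h : a * d - b * c = 1) :
    C a * C d - C b * C c = (1 : MvPolynomial σ A) := by
  simp only [← map_mul, ← map_sub, h, map_one]

def bind₁AlgEquiv (u v : σ → MvPolynomial σ A) (huv : ∀ i, bind₁ u (v i) = X i)
    (hvu : ∀ i, bind₁ v (u i) = X i) : MvPolynomial σ A ≃ₐ[A] MvPolynomial σ A :=
  AlgEquiv.ofAlgHom (bind₁ u) (bind₁ v) (algHom_ext fun i => by simpa using huv i)
    (algHom_ext fun i => by simpa using hvu i)

@[simp]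
theorem bind₁AlgEquiv_apply (u v : σ → MvPolynomial σ A) (huv : ∀ i, bind₁ u (v i) = X i)
    (hvu : ∀ i, bind₁ v (u i) = X i) (p : MvPolynomial σ A) :
    bind₁AlgEquiv u v huv hvu p = bind₁ u p := rfl

@[simp]
theorem bind₁AlgEquiv_symm_apply (u v : σ → MvPolynomial σ A) (huv : ∀ i, bind₁ u (v i) = X i)
    (hvu : ∀ i, bind₁ v (u i) = X i) (p : MvPolynomial σ A) :
    (bind₁AlgEquiv u v huv hvu).symm p = bind₁ v p := rfl

def linearAut (a b c d : A) (h : a * d - b * c = 1) :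
    MvPolynomial (Fin 2) A ≃ₐ[A] MvPolynomial (Fin 2) A :=
  bind₁AlgEquiv ![C a * X 0 + C b * X 1, C c * X 0 + C d * X 1]
    ![C d * X 0 - C b * X 1, -(C c * X 0) + C a * X 1]
    (by
      refine Fin.forall_fin_two.2 ⟨?_, ?_⟩ <;>
        simp only [Matrix.cons_val_zero, Matrix.cons_val_one, Matrix.cons_val_fin_one, map_add,
          map_sub, map_neg, map_mul, algHom_C, algebraMap_eq, bind₁_X_right]
      · linear_combination X 0 * C_mul_C_sub_C_mul_C_eq_one h
      · linear_combination X 1 * C_mul_C_sub_C_mul_C_eq_one h)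
    (by
      refine Fin.forall_fin_two.2 ⟨?_, ?_⟩ <;>
        simp only [Matrix.cons_val_zero, Matrix.cons_val_one, Matrix.cons_val_fin_one, map_add,
          map_mul, algHom_C, algebraMap_eq, bind₁_X_right]
      · linear_combination X 0 * C_mul_C_sub_C_mul_C_eq_one h
      · linear_combination X 1 * C_mul_C_sub_C_mul_C_eq_one h)

def triangularAut (p : Polynomial A) : MvPolynomial (Fin 2) A ≃ₐ[A] MvPolynomial (Fin 2) A :=
  bind₁AlgEquiv ![X 0, X 1 + Polynomial.aeval (X 0) p] ![X 0, X 1 - Polynomial.aeval (X 0) p]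
    (by simp [Fin.forall_fin_two, ← Polynomial.aeval_algHom_apply])
    (by simp [Fin.forall_fin_two, ← Polynomial.aeval_algHom_apply])

theorem linearAut_conj_triangularAut_apply_X_zero (a b c d : A) (h : a * d - b * c = 1)
    (p : Polynomial A) :
    (linearAut a b c d h * triangularAut p * (linearAut a b c d h)⁻¹) (X 0) =
      X 0 - C b * Polynomial.aeval (C a * X 0 + C b * X 1) p := by
  simp only [AlgEquiv.mul_apply, AlgEquiv.aut_inv, linearAut, triangularAut,
    bind₁AlgEquiv_apply, bind₁AlgEquiv_symm_apply, Matrix.cons_val_zero, Matrix.cons_val_one,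
    Matrix.cons_val_fin_one, map_add, map_sub, map_mul, algHom_C, algebraMap_eq,
    bind₁_X_right, ← Polynomial.aeval_algHom_apply]
  linear_combination X 0 * C_mul_C_sub_C_mul_C_eq_one h

theorem linearAut_conj_triangularAut_apply_X_one (a b c d : A) (h : a * d - b * c = 1)
    (p : Polynomial A) :
    (linearAut a b c d h * triangularAut p * (linearAut a b c d h)⁻¹) (X 1) =
      X 1 + C a * Polynomial.aeval (C a * X 0 + C b * X 1) p := by
  simp only [AlgEquiv.mul_apply, AlgEquiv.aut_inv, linearAut, triangularAut,
    bind₁AlgEquiv_apply, bind₁AlgEquiv_symm_apply, Matrix.cons_val_zero, Matrix.cons_val_one,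
    Matrix.cons_val_fin_one, map_add, map_neg, map_mul, algHom_C, algebraMap_eq,
    bind₁_X_right, ← Polynomial.aeval_algHom_apply]
  linear_combination X 1 * C_mul_C_sub_C_mul_C_eq_one h

end MvPolynomial

theorem isLinearAut_linearAut (a b c d : Polynomial F) (h : a * d - b * c = 1) :
    IsLinearAut F (linearAut a b c d h) :=
  ⟨a, b, c, d, 0, 0, ⟨1, one_ne_zero, by rw [h, Polynomial.C_1]⟩,
    by simp [linearAut], by simp [linearAut]⟩

theorem isElementary_triangularAut (p : Polynomial (Polynomial F)) :
    IsElementary F (triangularAut p) :=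
  Or.inl ⟨1, one_ne_zero, p, by simp [triangularAut], by simp [triangularAut]⟩

theorem isTame_linearAut_conj_triangularAut (a b c d : Polynomial F) (h : a * d - b * c = 1)
    (p : Polynomial (Polynomial F)) :
    IsTame F (linearAut a b c d h * triangularAut p * (linearAut a b c d h)⁻¹) :=
  mul_mem (mul_mem (Subgroup.subset_closure (Or.inr (isLinearAut_linearAut F a b c d h)))
    (Subgroup.subset_closure (Or.inl (isElementary_triangularAut F p))))
    (inv_mem (Subgroup.subset_closure (Or.inr (isLinearAut_linearAut F a b c d h))))

/-- Let `φ` be the `F(z)`-automorphism of `F(z)[x,y]` given by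
`x ↦ x + c₁R(a'₂₁x + a'₂₂y)`, `y ↦ y + c₂R(a'₂₁x + a'₂₂y)` where
`a'₂₁, a'₂₂ ∈ F[z]` are coprime, `R ∈ F[z][t]` and `c₁a'₂₁ + c₂a'₂₂ = 0`.
Then `φ` restricts to an `F[z]`-automorphism of `F[z][x,y]` which is tame. -/
theorem shear_restricts_and_is_tame
    (a₂₁ a₂₂ c₁ c₂ : Polynomial F) (hcop : IsCoprime a₂₁ a₂₂)
    (hc : c₁ * a₂₁ + c₂ * a₂₂ = 0) (R : Polynomial (Polynomial F))
    (φ : MvPolynomial (Fin 2) (RatFunc F) ≃ₐ[RatFunc F]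
      MvPolynomial (Fin 2) (RatFunc F))
    (hx : φ (X 0) = X 0 + C (algebraMap (Polynomial F) (RatFunc F) c₁) *
        Polynomial.aeval
          (C (algebraMap (Polynomial F) (RatFunc F) a₂₁) * X 0 +
           C (algebraMap (Polynomial F) (RatFunc F) a₂₂) * X 1) R)
    (hy : φ (X 1) = X 1 + C (algebraMap (Polynomial F) (RatFunc F) c₂) *
        Polynomial.aeval
          (C (algebraMap (Polynomial F) (RatFunc F) a₂₁) * X 0 +
           C (algebraMap (Polynomial F) (RatFunc F) a₂₂) * X 1) R) :
    ∃ ψ : MvPolynomial (Fin 2) (Polynomial F) ≃ₐ[Polynomial F]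
        MvPolynomial (Fin 2) (Polynomial F),
      (∀ p : MvPolynomial (Fin 2) (Polynomial F),
        MvPolynomial.map (algebraMap (Polynomial F) (RatFunc F)) (ψ p)
          = φ (MvPolynomial.map (algebraMap (Polynomial F) (RatFunc F)) p)) ∧
      IsTame F ψ := by
  obtain ⟨t, rfl, rfl⟩ := hcop.exists_eq_neg_mul_and_eq_mul hc
  obtain ⟨r, s, hrs⟩ := hcop
  have hdet : a₂₁ * r - a₂₂ * -s = 1 := by linear_combination hrs
  set L := linearAut a₂₁ a₂₂ (-s) r hdet
  refine ⟨L * triangularAut (Polynomial.C t * R) * L⁻¹,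
    map_algHom_apply_eq_of_X (AlgEquiv.toAlgHom _) φ.toAlgHom (Fin.forall_fin_two.2 ⟨?_, ?_⟩),
    isTame_linearAut_conj_triangularAut F _ _ _ _ hdet _⟩
  all_goals
    simp only [AlgEquiv.coe_toAlgHom, L, linearAut_conj_triangularAut_apply_X_zero,
      linearAut_conj_triangularAut_apply_X_one, hx, hy, map_add, map_sub, map_mul, map_neg,
      map_X, map_C, Polynomial.aeval_C, algebraMap_eq, map_polynomial_aeval]
    ring

end
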